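/- Let H and Γ be groups. Then genrk(H ≀ Γ) ≤ genrk(H) + genrk(Γ), where H ≀ Γ = (⊕_Γ H) ⋊ Γ is the restricted wreath product. -/

import Mathlib

open scoped commutatorElement in
/-- The mixed commutator length `cl_{G,N}` (∞ if not a product of mixed commutators). -/
noncomputable def clGN {G : Type*} [Group G] (N : Subgroup G) (x : G) : ℕ∞ :=
  sInf {n : ℕ∞ | ∃ k : ℕ, n = k ∧ ∃ g v : Fin k → G, (∀ i, v i ∈ N) ∧
    x = (List.ofFn fun i => ⁅g i, v i⁆).prod}

/-- The rank of a subgroup: minimal size of a generating set. -/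
noncomputable def rk {G : Type*} [Group G] (H : Subgroup G) : ℕ∞ :=
  sInf {n : ℕ∞ | ∃ S : Finset G, Subgroup.closure (S : Set G) = H ∧ n = S.card}

/-- The intermediate rank `intrk^Γ(Λ) = inf {rk Θ | Λ ≤ Θ ≤ Γ}`. -/
noncomputable def intrk {G : Type*} [Group G] (Λ : Subgroup G) : ℕ∞ :=
  sInf {n : ℕ∞ | ∃ Θ : Subgroup G, Λ ≤ Θ ∧ n = rk Θ}

/-- The general rank in the sense of Malcev. -/
noncomputable def genrk (G : Type*) [Group G] : ℕ∞ :=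
  sSup {n : ℕ∞ | ∃ Λ : Subgroup G, Λ.FG ∧ n = intrk Λ}

/-- The special rank in the sense of Malcev. -/
noncomputable def sperk (G : Type*) [Group G] : ℕ∞ :=
  sSup {n : ℕ∞ | ∃ Λ : Subgroup G, Λ.FG ∧ n = rk Λ}

variable (H : Type*) [Group H] (Γ : Type*) [Group Γ]

/-- The shift action of `Γ` on `Γ → H`. -/
def shiftPi : Γ →* MulAut (Γ → H) where
  toFun γ :=
    { toFun := fun f x => f (γ⁻¹ * x)
      invFun := fun f x => f (γ * x)
      left_inv := fun f => by funext x; simp [mul_assoc]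
      right_inv := fun f => by funext x; simp [← mul_assoc]
      map_mul' := fun f g => rfl }
  map_one' := by ext f x; simp
  map_mul' γ γ' := by ext f x; simp [mul_assoc]

/-- The restricted wreath product `H ≀ Γ`, realized as the subgroup of the unrestricted
wreath product `(Γ → H) ⋊ Γ` consisting of elements with finitely supported function part. -/
def restrictedWreath : Subgroup (SemidirectProduct (Γ → H) Γ (shiftPi H Γ)) where
  carrier := {p | (Function.mulSupport p.left).Finite}
  one_mem' := by simp [Function.mulSupport]
  mul_mem' := by
    intro a b ha hb
    have h2 : (Function.mulSupport ((shiftPi H Γ a.right) b.left)).Finite := by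
      refine Set.Finite.subset (hb.image (fun x => a.right * x)) ?_
      intro x hx
      exact ⟨a.right⁻¹ * x, hx, by group⟩
    refine Set.Finite.subset (ha.union h2) ?_
    have := Function.mulSupport_mul a.left ((shiftPi H Γ a.right) b.left)
    simpa [SemidirectProduct.mul_left] using this
  inv_mem' := by
    intro a ha
    have h : Function.mulSupport ((shiftPi H Γ a.right⁻¹) a.left⁻¹) ⊆
        (fun x => a.right⁻¹ * x) '' Function.mulSupport a.left := by
      intro x hx
      refine ⟨a.right * x, ?_, by group⟩
      simp only [Function.mem_mulSupport] at hx ⊢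
      simpa [shiftPi] using hx
    have : (Function.mulSupport ((shiftPi H Γ a.right⁻¹) a.left⁻¹)).Finite :=
      Set.Finite.subset (ha.image (fun x => a.right⁻¹ * x)) h
    simpa [SemidirectProduct.inv_left, Set.mem_setOf_eq] using this

/-!
Let `Λ ≤ H ≀ Γ` be generated by a finite set `X`, let `Λ_H ≤ H` be generated by the values of the
elements of `X`, and `Λ_Γ ≤ Γ` by their `Γ`-coordinates and supports. If `Λ_H ≤ ⟨S_H⟩` and
`Λ_Γ ≤ ⟨S_Γ⟩` for finite sets `S_H`, `S_Γ`, then `S_H` placed at coordinate `1` together with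
`S_Γ` generates every element whose `Γ`-coordinate and support lie in `⟨S_Γ⟩` and whose values lie
in `⟨S_H⟩`, because conjugating by `γ` moves coordinate `1` to `γ`. This subgroup contains `X`,
so `intrk Λ ≤ intrk Λ_H + intrk Λ_Γ`.
-/

open Function SemidirectProduct Subgroup

section Rank

variable {G : Type*} [Group G]

theorem rk_le_card {Θ : Subgroup G} (S : Finset G) (hS : closure (S : Set G) = Θ) :
    rk Θ ≤ S.card := by
  rw [rk]
  exact sInf_le ⟨S, hS, rfl⟩

theorem intrk_le_card {Λ : Subgroup G} (S : Finset G) (hS : Λ ≤ closure (S : Set G)) :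
    intrk Λ ≤ S.card := by
  rw [intrk]
  refine (sInf_le ?_).trans (rk_le_card S rfl)
  exact ⟨_, hS, rfl⟩

theorem exists_finset_card_eq_intrk {Λ : Subgroup G} (h : intrk Λ ≠ ⊤) :
    ∃ S : Finset G, Λ ≤ closure (S : Set G) ∧ (S.card : ℕ∞) = intrk Λ := by
  have hneΘ : {n : ℕ∞ | ∃ Θ : Subgroup G, Λ ≤ Θ ∧ n = rk Θ}.Nonempty := ⟨_, ⊤, le_top, rfl⟩
  obtain ⟨Θ, hΛΘ, hΘ⟩ : ∃ Θ : Subgroup G, Λ ≤ Θ ∧ intrk Λ = rk Θ := csInf_mem hneΘ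
  have hneS : {n : ℕ∞ | ∃ S : Finset G, closure (S : Set G) = Θ ∧ n = S.card}.Nonempty := by
    refine Set.nonempty_iff_ne_empty.2 fun hempty => h ?_
    rw [hΘ, rk, hempty, sInf_empty]
  obtain ⟨S, hS, hcard⟩ : ∃ S : Finset G, closure (S : Set G) = Θ ∧ rk Θ = S.card :=
    csInf_mem hneS
  exact ⟨S, hS ▸ hΛΘ, by rw [hΘ, hcard]⟩

theorem intrk_le_genrk {Λ : Subgroup G} (hΛ : Λ.FG) : intrk Λ ≤ genrk G :=
  le_sSup ⟨Λ, hΛ, rfl⟩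

theorem intrk_le_intrk_add_intrk {G₁ G₂ : Type*} [Group G₁] [Group G₂] (Λ : Subgroup G)
    (A : Subgroup G₁) (B : Subgroup G₂)
    (h : ∀ (SA : Finset G₁) (SB : Finset G₂), A ≤ closure (SA : Set G₁) →
      B ≤ closure (SB : Set G₂) → ∃ T : Finset G, Λ ≤ closure (T : Set G) ∧
        T.card ≤ SA.card + SB.card) :
    intrk Λ ≤ intrk A + intrk B := by
  rcases eq_or_ne (intrk A) ⊤ with hA | hA
  · simp [hA]
  rcases eq_or_ne (intrk B) ⊤ with hB | hB
  · simp [hB]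
  obtain ⟨SA, hASA, hSA⟩ := exists_finset_card_eq_intrk hA
  obtain ⟨SB, hBSB, hSB⟩ := exists_finset_card_eq_intrk hB
  obtain ⟨T, hΛT, hT⟩ := h SA SB hASA hBSB
  calc intrk Λ ≤ T.card := intrk_le_card T hΛT
    _ ≤ SA.card + SB.card := mod_cast hT
    _ = intrk A + intrk B := by rw [hSA, hSB]

end Rank

section Wreath

variable {H Γ}

local notation "𝒲" => SemidirectProduct (Γ → H) Γ (shiftPi H Γ)

theorem shiftPi_mulSingle [DecidableEq Γ] (γ x : Γ) (h : H) :
    shiftPi H Γ γ (Pi.mulSingle x h) = Pi.mulSingle (γ * x) h := by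
  funext y
  simp [shiftPi, Pi.mulSingle_apply, inv_mul_eq_iff_eq_mul]

theorem inl_mulSingle_eq_conj [DecidableEq Γ] (γ : Γ) (h : H) :
    (inl (Pi.mulSingle γ h) : 𝒲) = inr γ * inl (Pi.mulSingle 1 h) * inr γ⁻¹ := by
  rw [← inl_aut, shiftPi_mulSingle, mul_one]

theorem mem_of_right_mem_of_left_mem [DecidableEq Γ] {ΘH : Subgroup H} {ΘΓ : Subgroup Γ}
    {K : Subgroup 𝒲} (hH : ΘH ≤ K.comap (inl.comp (MonoidHom.mulSingle _ 1)))
    (hΓ : ΘΓ ≤ K.comap inr)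
    {p : 𝒲} (hfin : (mulSupport p.left).Finite) (hright : p.right ∈ ΘΓ)
    (hleft : ∀ x, p.left x ∈ ΘH) (hsupp : mulSupport p.left ⊆ ΘΓ) : p ∈ K := by
  rw [← inl_left_mul_inr_right p]
  refine mul_mem ?_ (hΓ hright)
  have hsingle : ∀ x ∈ hfin.toFinset, Pi.mulSingle x (p.left x) ∈ K.comap inl := by
    intro x hx
    have hxΘ : x ∈ ΘΓ := hsupp (hfin.mem_toFinset.1 hx)
    rw [mem_comap, inl_mulSingle_eq_conj]
    exact mul_mem (mul_mem (hΓ hxΘ) (hH (hleft x))) (hΓ (inv_mem hxΘ))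
  exact Submonoid.pi_mem_of_mulSingle_mem_aux hfin.toFinset p.left
    (fun x hx => notMem_mulSupport.1 fun hx' => hx (hfin.mem_toFinset.2 hx')) hsingle

theorem mulSupport_left_finite (p : restrictedWreath H Γ) : (mulSupport (p : 𝒲).left).Finite :=
  p.2

theorem inl_mulSingle_mem_restrictedWreath [DecidableEq Γ] (x : Γ) (h : H) :
    (inl (Pi.mulSingle x h) : 𝒲) ∈ restrictedWreath H Γ :=
  (Set.finite_singleton x).subset Pi.mulSupport_mulSingle_subset

theorem inr_mem_restrictedWreath (γ : Γ) : (inr γ : 𝒲) ∈ restrictedWreath H Γ := by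
  show (mulSupport (1 : Γ → H)).Finite
  simp

theorem intrk_closure_le_intrk_add_intrk (X : Finset (restrictedWreath H Γ)) :
    intrk (closure (X : Set (restrictedWreath H Γ))) ≤
      intrk (closure (⋃ p ∈ (X : Set (restrictedWreath H Γ)),
          (p : 𝒲).left '' mulSupport (p : 𝒲).left)) +
        intrk (closure (⋃ p ∈ (X : Set (restrictedWreath H Γ)),
          insert (p : 𝒲).right (mulSupport (p : 𝒲).left))) := by
  classical
  refine intrk_le_intrk_add_intrk _ _ _ fun SH SΓ hSH hSΓ => ?_
  let δ : H →* restrictedWreath H Γ :=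
    (inl.comp (MonoidHom.mulSingle (fun _ : Γ => H) 1)).codRestrict _
      (inl_mulSingle_mem_restrictedWreath (1 : Γ))
  let ι : Γ →* restrictedWreath H Γ := inr.codRestrict _ inr_mem_restrictedWreath
  set T := SH.image δ ∪ SΓ.image ι
  refine ⟨T, (closure_le _).2 fun p hp => ?_,
    (Finset.card_union_le _ _).trans (add_le_add Finset.card_image_le Finset.card_image_le)⟩
  set K := (closure (T : Set (restrictedWreath H Γ))).map (restrictedWreath H Γ).subtype
  have hH : closure (SH : Set H) ≤ K.comap (inl.comp (MonoidHom.mulSingle _ 1)) :=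
    (closure_le _).2 fun h hh =>
      mem_map_of_mem _ (subset_closure (Finset.mem_union_left _ (Finset.mem_image_of_mem δ hh)))
  have hΓ : closure (SΓ : Set Γ) ≤ K.comap inr :=
    (closure_le _).2 fun γ hγ =>
      mem_map_of_mem _ (subset_closure (Finset.mem_union_right _ (Finset.mem_image_of_mem ι hγ)))
  rw [SetLike.mem_coe, ← mem_map_iff_mem (restrictedWreath H Γ).subtype_injective]
  refine mem_of_right_mem_of_left_mem hH hΓ (mulSupport_left_finite p)
    (hSΓ (subset_closure (Set.mem_biUnion hp (Set.mem_insert _ _)))) (fun x => ?_)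
    (fun x hx => hSΓ (subset_closure (Set.mem_biUnion hp (Set.mem_insert_of_mem _ hx))))
  show (p : 𝒲).left x ∈ closure (SH : Set H)
  by_cases hx : x ∈ mulSupport (p : 𝒲).left
  · exact hSH (subset_closure (Set.mem_biUnion hp ⟨x, hx, rfl⟩))
  · rw [notMem_mulSupport.1 hx]
    exact one_mem _

end Wreath

/-- subadditivity of the general rank for restricted wreath products. -/
theorem genrk_wreath_le : genrk ↥(restrictedWreath H Γ) ≤ genrk H + genrk Γ := by
  refine sSup_le ?_
  rintro _ ⟨_, ⟨X, rfl⟩, rfl⟩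
  refine (intrk_closure_le_intrk_add_intrk X).trans
    (add_le_add (intrk_le_genrk ?_) (intrk_le_genrk ?_))
  · exact (fg_iff _).2
      ⟨_, rfl, X.finite_toSet.biUnion fun p _ => (mulSupport_left_finite p).image _⟩
  · exact (fg_iff _).2
      ⟨_, rfl, X.finite_toSet.biUnion fun p _ => (mulSupport_left_finite p).insert _⟩
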